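/- arXiv:1701.02604 — 9 statements merged into one kernel-verified Lean document; each statement's English description precedes it below -/
import Mathlib

section
/- Let n, m ≥ 1 be integers, let a₁,…,aₙ and b₁,…,bₘ be nonzero rational numbers, and let B₁,…,Bₘ, C₁,…,Cₘ, D₁,…,Dₙ, h, u, v be rational numbers with u ≠ 0 and S := ∑_{i=1}^m bᵢBᵢCᵢ² ≠ 0. Define xᵢ = −Dᵢu + h, Xᵢ = Dᵢu + h for 1 ≤ i ≤ n, and yᵢ = Bᵢu + Cᵢv, Yᵢ = −Bᵢu + Cᵢv for 1 ≤ i ≤ m. Then ∑_{i=1}^n aᵢxᵢ⁶ + ∑_{i=1}^m bᵢyᵢ³ = ∑_{i=1}^n aᵢXᵢ⁶ + ∑_{i=1}^m bᵢYᵢ³ holds if and only if v² = (2h ∑_{i=1}^n aᵢDᵢ⁵)/S · u⁴ + ((20h³ ∑_{i=1}^n aᵢDᵢ³ − ∑_{i=1}^m bᵢBᵢ³)/(3S)) · u² + (2h⁵ ∑_{i=1}^n aᵢDᵢ)/S. -/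
/-!
Under `u ↦ -u` the substituted sides are swapped, so their difference is odd in `u`: it is `2u`
times a polynomial that is linear in `v²` with coefficient `3S`. Cancelling `2u ≠ 0` and dividing
by `3S ≠ 0` solves for `v²`.
-/

open Finset

section WeightedSums

variable {R ι : Type*} [CommRing R] (s : Finset ι)

theorem sum_mul_add_pow_six_sub_sum_mul_neg_add_pow_six (a D : ι → R) (u h : R) :
    ∑ i ∈ s, a i * (D i * u + h) ^ 6 - ∑ i ∈ s, a i * (-D i * u + h) ^ 6 =
      2 * u * (6 * h ^ 5 * ∑ i ∈ s, a i * D i + 20 * h ^ 3 * u ^ 2 * ∑ i ∈ s, a i * D i ^ 3 +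
        6 * h * u ^ 4 * ∑ i ∈ s, a i * D i ^ 5) := by
  simp only [← sum_sub_distrib, mul_sum, ← sum_add_distrib]
  exact sum_congr rfl fun i _ => by ring

theorem sum_mul_add_pow_three_sub_sum_mul_neg_add_pow_three (b B C : ι → R) (u v : R) :
    ∑ i ∈ s, b i * (B i * u + C i * v) ^ 3 - ∑ i ∈ s, b i * (-B i * u + C i * v) ^ 3 =
      2 * u * (3 * v ^ 2 * ∑ i ∈ s, b i * B i * C i ^ 2 + u ^ 2 * ∑ i ∈ s, b i * B i ^ 3) := by
  simp only [← sum_sub_distrib, mul_sum, ← sum_add_distrib]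
  exact sum_congr rfl fun i _ => by ring

end WeightedSums

theorem eq_iff_sq_eq_quartic {K : Type*} [Field K] [CharZero K] {S T P₁ P₃ P₅ h u v : K} (hS : S ≠ 0) :
    3 * v ^ 2 * S + u ^ 2 * T = 6 * h ^ 5 * P₁ + 20 * h ^ 3 * u ^ 2 * P₃ + 6 * h * u ^ 4 * P₅ ↔
      v ^ 2 = 2 * h * P₅ / S * u ^ 4 + (20 * h ^ 3 * P₃ - T) / (3 * S) * u ^ 2 +
        2 * h ^ 5 * P₁ / S := by
  field_simp
  constructor <;> intro hE <;> linear_combination hE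

theorem stmt0_general (n m : ℕ)
    (a D : Fin n → ℚ) (b B C : Fin m → ℚ)
    (h u v : ℚ) (hu : u ≠ 0)
    (hS : ∑ i, b i * B i * (C i) ^ 2 ≠ 0)
    (x X : Fin n → ℚ) (y Y : Fin m → ℚ)
    (hx : ∀ i, x i = -(D i) * u + h) (hX : ∀ i, X i = D i * u + h)
    (hy : ∀ i, y i = B i * u + C i * v) (hY : ∀ i, Y i = -(B i) * u + C i * v) :
    ∑ i, a i * (x i) ^ 6 + ∑ i, b i * (y i) ^ 3 =
      ∑ i, a i * (X i) ^ 6 + ∑ i, b i * (Y i) ^ 3 ↔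
    v ^ 2 =
      (2 * h * ∑ i, a i * (D i) ^ 5) / (∑ i, b i * B i * (C i) ^ 2) * u ^ 4 +
      (20 * h ^ 3 * (∑ i, a i * (D i) ^ 3) - ∑ i, b i * (B i) ^ 3) /
        (3 * ∑ i, b i * B i * (C i) ^ 2) * u ^ 2 +
      (2 * h ^ 5 * ∑ i, a i * D i) / (∑ i, b i * B i * (C i) ^ 2) := by
  simp only [hx, hX, hy, hY]
  rw [add_comm, ← sub_eq_sub_iff_add_eq_add,
    sum_mul_add_pow_three_sub_sum_mul_neg_add_pow_three,
    sum_mul_add_pow_six_sub_sum_mul_neg_add_pow_six, mul_right_inj' (by positivity)]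
  exact eq_iff_sq_eq_quartic hS

/-- The substitution underlying Theorem 1: the equation
`∑ aᵢxᵢ⁶ + ∑ bᵢyᵢ³ = ∑ aᵢXᵢ⁶ + ∑ bᵢYᵢ³` with
`xᵢ = -Dᵢu + h`, `Xᵢ = Dᵢu + h`, `yᵢ = Bᵢu + Cᵢv`, `Yᵢ = -Bᵢu + Cᵢv`
is equivalent to the quartic equation in `(u, v)`. -/
theorem stmt0 (n m : ℕ) (hn : 1 ≤ n) (hm : 1 ≤ m)
    (a D : Fin n → ℚ) (b B C : Fin m → ℚ)
    (ha : ∀ i, a i ≠ 0) (hb : ∀ i, b i ≠ 0)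
    (h u v : ℚ) (hu : u ≠ 0)
    (hS : ∑ i, b i * B i * (C i) ^ 2 ≠ 0)
    (x X : Fin n → ℚ) (y Y : Fin m → ℚ)
    (hx : ∀ i, x i = -(D i) * u + h) (hX : ∀ i, X i = D i * u + h)
    (hy : ∀ i, y i = B i * u + C i * v) (hY : ∀ i, Y i = -(B i) * u + C i * v) :
    ∑ i, a i * (x i) ^ 6 + ∑ i, b i * (y i) ^ 3 =
      ∑ i, a i * (X i) ^ 6 + ∑ i, b i * (Y i) ^ 3 ↔
    v ^ 2 =
      (2 * h * ∑ i, a i * (D i) ^ 5) / (∑ i, b i * B i * (C i) ^ 2) * u ^ 4 +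
      (20 * h ^ 3 * (∑ i, a i * (D i) ^ 3) - ∑ i, b i * (B i) ^ 3) /
        (3 * ∑ i, b i * B i * (C i) ^ 2) * u ^ 2 +
      (2 * h ^ 5 * ∑ i, a i * D i) / (∑ i, b i * B i * (C i) ^ 2) :=
  stmt0_general n m a D b B C h u v hu hS x X y Y hx hX hy hY
end

section
/- Let n, m ≥ 1 be integers, let a₁,…,aₙ and b₁,…,bₘ be nonzero rational numbers, and let B₁,…,Bₘ, C₁,…,Cₘ, D₁,…,Dₙ, h, u, v be rational numbers with u ≠ 0 and S := ∑_{i=1}^m bᵢBᵢCᵢ² ≠ 0. Define xᵢ = Dᵢu + h, Xᵢ = −Dᵢu + h for 1 ≤ i ≤ n, and yᵢ = Bᵢu − Cᵢv, Yᵢ = Bᵢu + Cᵢv for 1 ≤ i ≤ m. Then ∑_{i=1}^n aᵢxᵢ⁶ + ∑_{i=1}^m bᵢyᵢ³ = ∑_{i=1}^n aᵢXᵢ⁶ − ∑_{i=1}^m bᵢYᵢ³ holds if and only if v² = (−2h ∑_{i=1}^n aᵢDᵢ⁵)/S · u⁴ − ((20h³ ∑_{i=1}^n aᵢDᵢ³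 + ∑_{i=1}^m bᵢBᵢ³)/(3S)) · u² − (2h⁵ ∑_{i=1}^n aᵢDᵢ)/S. -/
/-! Under the substitution, the sixth powers contribute only their odd part in `u`,
`(t + h)⁶ - (-t + h)⁶ = 12ht⁵ + 40h³t³ + 12h⁵t`, and the cubes only their even part in `v`,
`(p - q)³ + (p + q)³ = 2p³ + 6pq²`. Hence the difference of the two sides of the equation is
`6uS · (v² - Q(u))` with `Q` the quartic on the right, and `6uS ≠ 0`. -/

open Finset

theorem sum_mul_pow_six_sub_sum_mul_pow_six {ι R : Type*} [CommRing R] (s : Finset ι)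
    (a D : ι → R) (h u : R) :
    ∑ i ∈ s, a i * (D i * u + h) ^ 6 - ∑ i ∈ s, a i * (-D i * u + h) ^ 6 =
      12 * h * u ^ 5 * ∑ i ∈ s, a i * D i ^ 5 + 40 * h ^ 3 * u ^ 3 * ∑ i ∈ s, a i * D i ^ 3 +
        12 * h ^ 5 * u * ∑ i ∈ s, a i * D i := by
  simp only [← sum_sub_distrib, mul_sum, ← sum_add_distrib]
  exact sum_congr rfl fun i _ => by ring

theorem sum_mul_pow_three_add_sum_mul_pow_three {ι R : Type*} [CommRing R] (s : Finset ι)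
    (b B C : ι → R) (u v : R) :
    ∑ i ∈ s, b i * (B i * u - C i * v) ^ 3 + ∑ i ∈ s, b i * (B i * u + C i * v) ^ 3 =
      2 * u ^ 3 * ∑ i ∈ s, b i * B i ^ 3 + 6 * u * v ^ 2 * ∑ i ∈ s, b i * B i * C i ^ 2 := by
  simp only [← sum_add_distrib, mul_sum]
  exact sum_congr rfl fun i _ => by ring

theorem stmt1_general (n m : ℕ)
    (a D : Fin n → ℚ) (b B C : Fin m → ℚ)
    (h u v : ℚ) (hu : u ≠ 0)
    (hS : ∑ i, b i * B i * (C i) ^ 2 ≠ 0)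
    (x X : Fin n → ℚ) (y Y : Fin m → ℚ)
    (hx : ∀ i, x i = D i * u + h) (hX : ∀ i, X i = -(D i) * u + h)
    (hy : ∀ i, y i = B i * u - C i * v) (hY : ∀ i, Y i = B i * u + C i * v) :
    ∑ i, a i * (x i) ^ 6 + ∑ i, b i * (y i) ^ 3 =
      ∑ i, a i * (X i) ^ 6 - ∑ i, b i * (Y i) ^ 3 ↔
    v ^ 2 =
      (-2 * h * ∑ i, a i * (D i) ^ 5) / (∑ i, b i * B i * (C i) ^ 2) * u ^ 4 -
      (20 * h ^ 3 * (∑ i, a i * (D i) ^ 3) + ∑ i, b i * (B i) ^ 3) /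
        (3 * ∑ i, b i * B i * (C i) ^ 2) * u ^ 2 -
      (2 * h ^ 5 * ∑ i, a i * D i) / (∑ i, b i * B i * (C i) ^ 2) := by
  simp only [hx, hX, hy, hY]
  set S := ∑ i, b i * B i * C i ^ 2
  set Q := (-2 * h * ∑ i, a i * D i ^ 5) / S * u ^ 4 -
    (20 * h ^ 3 * (∑ i, a i * D i ^ 3) + ∑ i, b i * B i ^ 3) / (3 * S) * u ^ 2 -
    (2 * h ^ 5 * ∑ i, a i * D i) / S
  have hdiff : (∑ i, a i * (D i * u + h) ^ 6 + ∑ i, b i * (B i * u - C i * v) ^ 3) -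
      (∑ i, a i * (-D i * u + h) ^ 6 - ∑ i, b i * (B i * u + C i * v) ^ 3) =
      6 * u * S * (v ^ 2 - Q) := by
    have hQ : 6 * u * S * Q = -(12 * h * u ^ 5 * ∑ i, a i * D i ^ 5 +
        40 * h ^ 3 * u ^ 3 * ∑ i, a i * D i ^ 3 + 12 * h ^ 5 * u * ∑ i, a i * D i +
        2 * u ^ 3 * ∑ i, b i * B i ^ 3) := by
      simp only [Q]
      field_simp
      ring
    linear_combination sum_mul_pow_six_sub_sum_mul_pow_six univ a D h u +
      sum_mul_pow_three_add_sum_mul_pow_three univ b B C u v + hQ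
  have hscale : 6 * u * S ≠ 0 := mul_ne_zero (mul_ne_zero (by norm_num) hu) hS
  rw [← sub_eq_zero, hdiff, mul_eq_zero, or_iff_right hscale, sub_eq_zero]

/-- The substitution underlying Theorem 2: the equation
`∑ aᵢxᵢ⁶ + ∑ bᵢyᵢ³ = ∑ aᵢXᵢ⁶ - ∑ bᵢYᵢ³` with
`xᵢ = Dᵢu + h`, `Xᵢ = -Dᵢu + h`, `yᵢ = Bᵢu - Cᵢv`, `Yᵢ = Bᵢu + Cᵢv`
is equivalent to the quartic equation in `(u, v)`. -/
theorem stmt1 (n m : ℕ) (hn : 1 ≤ n) (hm : 1 ≤ m)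
    (a D : Fin n → ℚ) (b B C : Fin m → ℚ)
    (ha : ∀ i, a i ≠ 0) (hb : ∀ i, b i ≠ 0)
    (h u v : ℚ) (hu : u ≠ 0)
    (hS : ∑ i, b i * B i * (C i) ^ 2 ≠ 0)
    (x X : Fin n → ℚ) (y Y : Fin m → ℚ)
    (hx : ∀ i, x i = D i * u + h) (hX : ∀ i, X i = -(D i) * u + h)
    (hy : ∀ i, y i = B i * u - C i * v) (hY : ∀ i, Y i = B i * u + C i * v) :
    ∑ i, a i * (x i) ^ 6 + ∑ i, b i * (y i) ^ 3 =
      ∑ i, a i * (X i) ^ 6 - ∑ i, b i * (Y i) ^ 3 ↔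
    v ^ 2 =
      (-2 * h * ∑ i, a i * (D i) ^ 5) / (∑ i, b i * B i * (C i) ^ 2) * u ^ 4 -
      (20 * h ^ 3 * (∑ i, a i * (D i) ^ 3) + ∑ i, b i * (B i) ^ 3) /
        (3 * ∑ i, b i * B i * (C i) ^ 2) * u ^ 2 -
      (2 * h ^ 5 * ∑ i, a i * D i) / (∑ i, b i * B i * (C i) ^ 2) :=
  stmt1_general n m a D b B C h u v hu hS x X y Y hx hX hy hY
end

section
/- There exist infinitely many quadruples (x, y, X, Y) of positive integers with x ≠ X satisfying x⁶ + y³ = X⁶ + Y³. -/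
/-! The equation `x⁶ + y³ = X⁶ + Y³` is weighted homogeneous: scaling `(x, y, X, Y)` by
`(k, k², k, k²)` multiplies both sides by `k⁶`. Scaling the solution `1⁶ + 12³ = 3⁶ + 10³`
by every positive integer `k` gives infinitely many solutions, told apart by their first entry. -/

theorem pow_six_add_pow_three_weighted_smul {R : Type*} [CommSemiring R] {x y X Y : R}
    (h : x ^ 6 + y ^ 3 = X ^ 6 + Y ^ 3) (k : R) :
    (k * x) ^ 6 + (k ^ 2 * y) ^ 3 = (k * X) ^ 6 + (k ^ 2 * Y) ^ 3 :=
  calc (k * x) ^ 6 + (k ^ 2 * y) ^ 3 = k ^ 6 * (x ^ 6 + y ^ 3) := by ring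
    _ = k ^ 6 * (X ^ 6 + Y ^ 3) := by rw [h]
    _ = (k * X) ^ 6 + (k ^ 2 * Y) ^ 3 := by ring

/-- There are infinitely many quadruples of positive integers `(x, y, X, Y)` with `x ≠ X`
satisfying `x⁶ + y³ = X⁶ + Y³`. -/
theorem stmt7 :
    {p : ℕ × ℕ × ℕ × ℕ | 0 < p.1 ∧ 0 < p.2.1 ∧ 0 < p.2.2.1 ∧ 0 < p.2.2.2 ∧
      p.1 ≠ p.2.2.1 ∧
      p.1 ^ 6 + p.2.1 ^ 3 = p.2.2.1 ^ 6 + p.2.2.2 ^ 3}.Infinite := by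
  have base : (1 : ℕ) ^ 6 + 12 ^ 3 = 3 ^ 6 + 10 ^ 3 := by norm_num
  refine Set.infinite_of_injective_forall_mem
    (f := fun k : ℕ => ((k + 1) * 1, (k + 1) ^ 2 * 12, (k + 1) * 3, (k + 1) ^ 2 * 10))
    (fun a b hab => by simpa using congrArg Prod.fst hab) fun k => ?_
  refine ⟨by positivity, by positivity, by positivity, by positivity, by dsimp only; omega, ?_⟩
  exact pow_six_add_pow_three_weighted_smul base (k + 1)
end

section
/- There exist infinitely many quadruples (x, y, X, Y) of positive integers with x ≠ X satisfying 2x⁶ + y³ = 2X⁶ + Y³. -/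
/-
Giving `x` weight 1 and `y` weight 2 makes `2x⁶ + y³` homogeneous of degree 6, so the single
solution `2·15⁶ + 1380³ = 2·33⁶ + 408³` yields the infinite family
`(15k, 1380k², 33k, 408k²)`, `k ≥ 1`.
-/

theorem two_mul_pow_six_add_pow_three_scale {R : Type*} [CommSemiring R] {x y X Y : R}
    (k : R)
    (h : 2 * x ^ 6 + y ^ 3 = 2 * X ^ 6 + Y ^ 3) :
    2 * (k * x) ^ 6 + (k ^ 2 * y) ^ 3 = 2 * (k * X) ^ 6 + (k ^ 2 * Y) ^ 3 :=
  calc 2 * (k * x) ^ 6 + (k ^ 2 * y) ^ 3 = k ^ 6 * (2 * x ^ 6 + y ^ 3) := by ring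
    _ = k ^ 6 * (2 * X ^ 6 + Y ^ 3) := by rw [h]
    _ = 2 * (k * X) ^ 6 + (k ^ 2 * Y) ^ 3 := by ring

theorem two_mul_pow_six_add_pow_three_eq_15_1380_33_408 :
    (2 * 15 ^ 6 + 1380 ^ 3 : ℕ) = 2 * 33 ^ 6 + 408 ^ 3 := by
  norm_num

/-- There are infinitely many quadruples of positive integers `(x, y, X, Y)` with `x ≠ X`
satisfying `2x⁶ + y³ = 2X⁶ + Y³`. -/
theorem stmt8 :
    {p : ℕ × ℕ × ℕ × ℕ | 0 < p.1 ∧ 0 < p.2.1 ∧ 0 < p.2.2.1 ∧ 0 < p.2.2.2 ∧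
      p.1 ≠ p.2.2.1 ∧
      2 * p.1 ^ 6 + p.2.1 ^ 3 = 2 * p.2.2.1 ^ 6 + p.2.2.2 ^ 3}.Infinite := by
  let family : ℕ → ℕ × ℕ × ℕ × ℕ := fun n =>
    ((n + 1) * 15, (n + 1) ^ 2 * 1380, (n + 1) * 33, (n + 1) ^ 2 * 408)
  have family_injective : family.Injective := fun m n h => by
    have : (m + 1) * 15 = (n + 1) * 15 := congrArg Prod.fst h
    omega
  refine Set.infinite_of_injective_forall_mem family_injective fun n => ?_
  refine ⟨by positivity, by positivity, by positivity, by positivity, ?_, ?_⟩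
  · show (n + 1) * 15 ≠ (n + 1) * 33
    omega
  · exact two_mul_pow_six_add_pow_three_scale (n + 1)
      two_mul_pow_six_add_pow_three_eq_15_1380_33_408
end

section
/- There exist infinitely many quadruples (x, y, X, Y) of positive integers with x ≠ X satisfying x⁶ + 7y³ = X⁶ + 7Y³. -/
/-! The equation `x⁶ + c y³ = X⁶ + c Y³` is weighted homogeneous, so `(x, y, X, Y) ↦ (t x, t² y, t X, t² Y)`
multiplies both sides by `t⁶` and maps solutions to solutions. Scaling the single solution
`7⁶ + 7·140³ = 14⁶ + 7·119³` by every `t ≥ 1` gives infinitely many. -/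

theorem pow_six_add_mul_pow_three_scale {R : Type*} [CommSemiring R] {c x y X Y : R} (t : R)
    (h : x ^ 6 + c * y ^ 3 = X ^ 6 + c * Y ^ 3) :
    (t * x) ^ 6 + c * (t ^ 2 * y) ^ 3 = (t * X) ^ 6 + c * (t ^ 2 * Y) ^ 3 :=
  calc (t * x) ^ 6 + c * (t ^ 2 * y) ^ 3 = t ^ 6 * (x ^ 6 + c * y ^ 3) := by ring
    _ = t ^ 6 * (X ^ 6 + c * Y ^ 3) := by rw [h]
    _ = (t * X) ^ 6 + c * (t ^ 2 * Y) ^ 3 := by ring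

def scaledSolution (t : ℕ) : ℕ × ℕ × ℕ × ℕ := (t * 7, t ^ 2 * 140, t * 14, t ^ 2 * 119)

theorem scaledSolution_injective : Function.Injective scaledSolution := fun s t h =>
  Nat.eq_of_mul_eq_mul_right (by norm_num) (Prod.ext_iff.mp h).1

theorem scaledSolution_eq (t : ℕ) :
    (t * 7) ^ 6 + 7 * (t ^ 2 * 140) ^ 3 = (t * 14) ^ 6 + 7 * (t ^ 2 * 119) ^ 3 :=
  pow_six_add_mul_pow_three_scale t (by norm_num)

/-- There are infinitely many quadruples of positive integers `(x, y, X, Y)` with `x ≠ X`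
satisfying `x⁶ + 7y³ = X⁶ + 7Y³`. -/
theorem stmt9 :
    {p : ℕ × ℕ × ℕ × ℕ | 0 < p.1 ∧ 0 < p.2.1 ∧ 0 < p.2.2.1 ∧ 0 < p.2.2.2 ∧
      p.1 ≠ p.2.2.1 ∧
      p.1 ^ 6 + 7 * p.2.1 ^ 3 = p.2.2.1 ^ 6 + 7 * p.2.2.2 ^ 3}.Infinite := by
  refine Set.infinite_of_injective_forall_mem
    (scaledSolution_injective.comp Nat.succ_injective) fun n => ?_
  dsimp only [Set.mem_ofPred_eq, Function.comp_apply, scaledSolution]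
  refine ⟨by positivity, by positivity, by positivity, by positivity, ?_, scaledSolution_eq _⟩
  exact (Nat.mul_lt_mul_of_pos_left (by norm_num) n.succ_pos).ne
end

section
/- The point P = (−48, 80) lies on the elliptic curve Y² = X³ + 53X² − 1024X − 54272 over ℚ and has infinite order in the group of rational points of this curve. -/
/-!
The curve is `Y² = (X - 32)(X + 32)(X + 53)`, so its 2-torsion is rational. If `2Q = (x, y)` then
every `x - eᵢ` is a square. This excludes points of order 4 (for each root `e`, one of
`e - eᵢ` is `85`, `-64` or `-85`), so for a torsion point `P` of order `2ᵃb`, `b` odd,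
`T = bP` is 2-torsion and `P + T`, being killed by `b`, lies in `2E(ℚ)`. But
`x(P + T) - 32 ∈ {-80, -68, 20, 272}` is never a square.
-/

/-- The elliptic curve `Y² = X³ + 53X² - 1024X - 54272` over `ℚ`. -/
def W10 : WeierstrassCurve.Affine ℚ :=
  { a₁ := 0, a₂ := 53, a₃ := 0, a₄ := -1024, a₆ := -54272 }

open WeierstrassCurve.Affine WeierstrassCurve.Affine.Point

section TwoPrimaryTorsion

variable {G : Type*}

lemma exists_two_nsmul_eq_of_odd_nsmul_eq_zero [AddMonoid G] {b : ℕ} (hb : Odd b) {S : G} (hS : b • S = 0) :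
    ∃ Q : G, 2 • Q = S := by
  obtain ⟨k, rfl⟩ := hb
  refine ⟨(k + 1) • S, ?_⟩
  rw [← mul_nsmul', show 2 * (k + 1) = (2 * k + 1) + 1 by ring, succ_nsmul, hS, zero_add]

lemma two_nsmul_eq_zero_of_two_pow_nsmul_eq_zero [AddMonoid G] (h4 : ∀ S : G, 4 • S = 0 → 2 • S = 0) :
    ∀ (a : ℕ) {S : G}, 2 ^ a • S = 0 → 2 • S = 0
  | 0, S, hS => by rw [pow_zero, one_nsmul] at hS; rw [hS, nsmul_zero]
  | a + 1, S, hS => by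
    rw [pow_succ', mul_nsmul] at hS
    have h4S : 4 • S = 0 := by
      rw [show 4 = 2 * 2 from rfl, mul_nsmul]
      exact two_nsmul_eq_zero_of_two_pow_nsmul_eq_zero h4 a hS
    exact h4 S h4S

lemma IsOfFinAddOrder.exists_two_nsmul_eq_add_two_torsion [AddCommMonoid G]
    (h4 : ∀ S : G, 4 • S = 0 → 2 • S = 0) {P : G} (hP : IsOfFinAddOrder P) :
    ∃ T Q : G, 2 • T = 0 ∧ 2 • Q = P + T := by
  obtain ⟨n, hn, hnP⟩ := isOfFinAddOrder_iff_nsmul_eq_zero.mp hP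
  obtain ⟨a, b, hb, rfl⟩ := Nat.exists_eq_two_pow_mul_odd hn.ne'
  rw [mul_comm, mul_nsmul] at hnP
  have hT : 2 • b • P = 0 := two_nsmul_eq_zero_of_two_pow_nsmul_eq_zero h4 a hnP
  have hbT : b • b • P = b • P := by
    obtain ⟨k, rfl⟩ := hb
    rw [succ_nsmul, mul_nsmul, hT, nsmul_zero, zero_add]
  obtain ⟨Q, hQ⟩ := exists_two_nsmul_eq_of_odd_nsmul_eq_zero hb (S := P + b • P)
    (by rw [nsmul_add, hbT, ← two_nsmul, hT])
  exact ⟨b • P, Q, hT, hQ⟩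

end TwoPrimaryTorsion

namespace WeierstrassCurve.Affine

variable {F : Type*} [Field F] {W : WeierstrassCurve.Affine F} {e₁ e₂ e₃ : F}

/-- `W` is `Y² = (X - e₁)(X - e₂)(X - e₃)`, its coefficients given by Vieta's formulas. -/
structure IsSplit (W : Affine F) (e₁ e₂ e₃ : F) : Prop where
  a₁_eq : W.a₁ = 0
  a₃_eq : W.a₃ = 0
  a₂_eq : W.a₂ = -(e₁ + e₂ + e₃)
  a₄_eq : W.a₄ = e₁ * e₂ + e₁ * e₃ + e₂ * e₃
  a₆_eq : W.a₆ = -(e₁ * e₂ * e₃)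

namespace IsSplit

variable (hW : W.IsSplit e₁ e₂ e₃)
include hW

lemma rotate : W.IsSplit e₂ e₃ e₁ where
  a₁_eq := hW.a₁_eq
  a₃_eq := hW.a₃_eq
  a₂_eq := by rw [hW.a₂_eq]; ring
  a₄_eq := by rw [hW.a₄_eq]; ring
  a₆_eq := by rw [hW.a₆_eq]; ring

lemma negY (x y : F) : W.negY x y = -y := by
  simp [Affine.negY, hW.a₁_eq, hW.a₃_eq]

lemma equation_iff {x y : F} : W.Equation x y ↔ y ^ 2 = (x - e₁) * (x - e₂) * (x - e₃) := by
  rw [Affine.equation_iff, hW.a₁_eq, hW.a₃_eq, hW.a₂_eq, hW.a₄_eq, hW.a₆_eq]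
  constructor <;> intro h <;> linear_combination h

lemma X_eq_root_of_equation_zero {x : F} (h : W.Equation x 0) : x = e₁ ∨ x = e₂ ∨ x = e₃ := by
  have h0 : (x - e₁) * ((x - e₂) * (x - e₃)) = 0 := by
    linear_combination -(hW.equation_iff.mp h)
  rcases mul_eq_zero.mp h0 with h1 | h23
  · exact .inl (sub_eq_zero.mp h1)
  rcases mul_eq_zero.mp h23 with h2 | h3
  · exact .inr (.inl (sub_eq_zero.mp h2))
  · exact .inr (.inr (sub_eq_zero.mp h3))

lemma Y_eq_zero_of_two_nsmul_eq_zero [DecidableEq F] [NeZero (2 : F)] {x y : F}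
    {h : W.Nonsingular x y} (h2 : 2 • Point.some x y h = 0) : y = 0 := by
  have hy : y = W.negY x y := by
    by_contra hy
    rw [two_nsmul, add_self_of_Y_ne hy] at h2
    exact some_ne_zero _ h2
  rw [hW.negY] at hy
  exact (mul_eq_zero.mp (by linear_combination hy : (2 : F) * y = 0)).resolve_left two_ne_zero

lemma isSquare_X_sub_of_two_nsmul_eq [DecidableEq F] {Q : W.Point} {x y : F}
    {h : W.Nonsingular x y} (hQ : 2 • Q = Point.some x y h) : IsSquare (x - e₁) := by
  rw [two_nsmul] at hQ
  cases Q with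
  | zero => exact absurd hQ.symm (by rw [← zero_def, add_zero]; exact some_ne_zero h)
  | @some u v hQ' =>
    have hv : v ≠ W.negY u v := by
      intro hv
      rw [add_self_of_Y_eq hv] at hQ
      exact some_ne_zero h hQ.symm
    rw [add_self_of_Y_ne hv, some.injEq] at hQ
    have hd : (v - -v) ^ 2 = 4 * ((u - e₁) * (u - e₂) * (u - e₃)) := by
      linear_combination 4 * hW.equation_iff.mp hQ'.1
    have hd0 : v - -v ≠ 0 := sub_ne_zero.mpr (hW.negY u v ▸ hv)
    refine ⟨((u - e₁) ^ 2 - (e₁ - e₂) * (e₁ - e₃)) / (v - -v), ?_⟩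
    rw [← hQ.1, slope_of_Y_ne rfl hv, addX, hW.negY, hW.a₁_eq, hW.a₂_eq, hW.a₄_eq]
    generalize v - -v = d at hd hd0 ⊢
    field_simp
    linear_combination (e₂ + e₃ - 2 * u) * hd

end IsSplit

end WeierstrassCurve.Affine

lemma W10_isSplit : W10.IsSplit 32 (-32) (-53) := by
  constructor <;> norm_num [W10]

lemma W10_nonsingular : W10.Nonsingular (-48) 80 := by
  rw [nonsingular_iff, W10_isSplit.equation_iff]
  norm_num [W10]

lemma W10_two_nsmul_eq_zero_of_four_nsmul_eq_zero (S : W10.Point) (hS : 4 • S = 0) :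
    2 • S = 0 := by
  rw [show 4 = 2 * 2 from rfl, mul_nsmul] at hS
  generalize hT : 2 • S = T at hS
  cases T with
  | zero => rfl
  | @some x y h =>
    obtain rfl := W10_isSplit.Y_eq_zero_of_two_nsmul_eq_zero hS
    have hsq₁ := W10_isSplit.isSquare_X_sub_of_two_nsmul_eq hT
    have hsq₃ := W10_isSplit.rotate.rotate.isSquare_X_sub_of_two_nsmul_eq hT
    rcases W10_isSplit.X_eq_root_of_equation_zero h.1 with rfl | rfl | rfl <;>
      revert hsq₁ hsq₃ <;> norm_num

lemma W10_add_two_torsion (T : W10.Point) (hT : 2 • T = 0) :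
    ∃ (x y : ℚ) (h : W10.Nonsingular x y),
      Point.some _ _ W10_nonsingular + T = Point.some x y h ∧ ¬IsSquare (x - 32) := by
  cases T with
  | zero => exact ⟨_, _, W10_nonsingular, add_zero _, by norm_num⟩
  | @some x y h =>
    obtain rfl := W10_isSplit.Y_eq_zero_of_two_nsmul_eq_zero hT
    rcases W10_isSplit.X_eq_root_of_equation_zero h.1 with rfl | rfl | rfl <;>
      exact ⟨_, _, _, add_of_X_ne (by norm_num), by
        rw [slope_of_X_ne (by norm_num)]; norm_num [addX, W10]⟩

/-- The point `(-48, 80)` lies on `Y² = X³ + 53X² - 1024X - 54272` and has infinite order. -/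
theorem stmt10 : W10.Equation (-48) 80 ∧
    ∃ h : W10.Nonsingular (-48) 80,
      ¬ IsOfFinAddOrder (WeierstrassCurve.Affine.Point.some _ _ h) := by
  refine ⟨W10_nonsingular.1, W10_nonsingular, fun hfin => ?_⟩
  obtain ⟨T, Q, hT, hQ⟩ :=
    hfin.exists_two_nsmul_eq_add_two_torsion W10_two_nsmul_eq_zero_of_four_nsmul_eq_zero
  obtain ⟨x, y, h, hPT, hx⟩ := W10_add_two_torsion T hT
  exact hx (W10_isSplit.isSquare_X_sub_of_two_nsmul_eq (hQ.trans hPT))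
end

section
/- The point P₁ = (−1792/243, 3328/2187) lies on the elliptic curve Y² = X³ + (1831/243)X² − (262144/6561)X − 479985664/1594323 over ℚ and has infinite order in the group of rational points of this curve. -/
/-!
On a curve `Y² = X³ + a₂X² + a₄X + a₆` with `2`-integral coefficients, a point `Q = (x, y)`
with `|x|₂ > 1` has `|y|₂² = |x|₂³`; the numerator `3x² + 2a₂x + a₄` of the tangent slope has
norm `|x|₂²` and the denominator `2y` has norm `|y|₂ / 2`, so the slope `λ` has `|λ|₂² = 4|x|₂`,
and `x(2Q) = λ² - a₂ - 2x` gives `|x(2Q)|₂ = 4|x|₂`. The points `2ᵏQ` are then pairwise distinct,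
so `Q` has infinite order.
For `P₁` the first multiple with `|x|₂ > 1` is `6P₁`, where `|x|₂ = 16`.
-/

/-- The elliptic curve `Y² = X³ + (1831/243)X² - (262144/6561)X - 479985664/1594323` over `ℚ`. -/
def W11 : WeierstrassCurve.Affine ℚ :=
  { a₁ := 0, a₂ := 1831 / 243, a₃ := 0, a₄ := -262144 / 6561, a₆ := -479985664 / 1594323 }

open WeierstrassCurve.Affine

section padicNorm

variable {p : ℕ} [Fact p.Prime]

lemma padicNorm_add_eq_left {q r : ℚ} (h : padicNorm p r < padicNorm p q) :
    padicNorm p (q + r) = padicNorm p q := by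
  rw [padicNorm.add_eq_max_of_ne h.ne', max_eq_left h.le]

lemma padicNorm_add_lt {q r c : ℚ} (hq : padicNorm p q < c) (hr : padicNorm p r < c) :
    padicNorm p (q + r) < c :=
  padicNorm.nonarchimedean.trans_lt (max_lt hq hr)

lemma padicNorm_pow (q : ℚ) (n : ℕ) : padicNorm p (q ^ n) = padicNorm p q ^ n :=
  IsAbsoluteValue.abv_pow (padicNorm p) q n

lemma padicNorm_le_one_of_not_dvd_den {q : ℚ} (hq : ¬p ∣ q.den) : padicNorm p q ≤ 1 := by
  rw [← Rat.num_div_den q, padicNorm.div, (padicNorm.nat_eq_one_iff _).2 hq, div_one]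
  exact padicNorm.of_int q.num

lemma padicNorm_intCast_div_pow_mul {a b : ℤ} (k : ℕ) (ha : ¬(p : ℤ) ∣ a)
    (hb : ¬(p : ℤ) ∣ b) :
    padicNorm p (a / (p ^ k * b)) = p ^ k := by
  rw [padicNorm.div, padicNorm.mul, padicNorm_pow, padicNorm.padicNorm_p_of_prime,
    (padicNorm.int_eq_one_iff a).2 ha, (padicNorm.int_eq_one_iff b).2 hb]
  simp

end padicNorm

lemma padicNorm_two : padicNorm 2 2 = 2⁻¹ := by
  simpa using padicNorm.padicNorm_p_of_prime (p := 2)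

lemma not_isOfFinAddOrder_of_injective_nsmul_comp {G : Type*} [AddMonoid G] {a : G}
    {f : ℕ → ℕ} (hf : Function.Injective fun k => f k • a) : ¬IsOfFinAddOrder a := fun ha =>
  Set.infinite_range_of_injective hf <| ha.finite_multiples.subset <|
    Set.range_subset_iff.2 fun k => (AddSubmonoid.mem_multiples_iff _ _).2 ⟨f k, rfl⟩

lemma WeierstrassCurve.Affine.Point.some_add_some_eq_some {F : Type*} [Field F] [DecidableEq F]
    {W : WeierstrassCurve.Affine F} {x₁ y₁ x₂ y₂ x₃ y₃ : F} {h₁ : W.Nonsingular x₁ y₁}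
    {h₂ : W.Nonsingular x₂ y₂} {h₃ : W.Nonsingular x₃ y₃} (hxy : ¬(x₁ = x₂ ∧ y₁ = W.negY x₂ y₂))
    (hx : W.addX x₁ x₂ (W.slope x₁ x₂ y₁ y₂) = x₃)
    (hy : W.addY x₁ x₂ y₁ (W.slope x₁ x₂ y₁ y₂) = y₃) :
    Point.some _ _ h₁ + Point.some _ _ h₂ = Point.some _ _ h₃ := by
  rw [Point.add_some hxy, Point.some.injEq]
  exact ⟨hx, hy⟩

structure IsTwoIntegralCubic (W : WeierstrassCurve.Affine ℚ) : Prop where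
  a₁_eq_zero : W.a₁ = 0
  a₃_eq_zero : W.a₃ = 0
  padicNorm_a₂_le_one : padicNorm 2 W.a₂ ≤ 1
  padicNorm_a₄_le_one : padicNorm 2 W.a₄ ≤ 1
  padicNorm_a₆_le_one : padicNorm 2 W.a₆ ≤ 1

namespace IsTwoIntegralCubic

variable {W : WeierstrassCurve.Affine ℚ} {x y : ℚ}

lemma padicNorm_Y_sq (hW : IsTwoIntegralCubic W) (h : W.Equation x y)
    (hx : 1 < padicNorm 2 x) : padicNorm 2 y ^ 2 = padicNorm 2 x ^ 3 := by
  have hy : y ^ 2 = x ^ 3 + (W.a₂ * x ^ 2 + W.a₄ * x + W.a₆) := by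
    have := (W.equation_iff x y).1 h
    rw [hW.a₁_eq_zero, hW.a₃_eq_zero] at this
    linear_combination this
  have hlower : padicNorm 2 (W.a₂ * x ^ 2 + W.a₄ * x + W.a₆) < padicNorm 2 x ^ 3 := by
    refine padicNorm_add_lt (padicNorm_add_lt ?_ ?_) ?_
    · rw [padicNorm.mul, padicNorm_pow]
      exact (mul_le_of_le_one_left (by positivity) hW.padicNorm_a₂_le_one).trans_lt
        (pow_lt_pow_right₀ hx (by norm_num))
    · rw [padicNorm.mul]
      exact (mul_le_of_le_one_left (by positivity) hW.padicNorm_a₄_le_one).trans_lt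
        (by simpa using pow_lt_pow_right₀ hx (by norm_num : 1 < 3))
    · exact hW.padicNorm_a₆_le_one.trans_lt (one_lt_pow₀ hx (by norm_num))
  rw [← padicNorm_pow, hy, padicNorm_add_eq_left (by rwa [padicNorm_pow]), padicNorm_pow]

lemma Y_ne_negY (hW : IsTwoIntegralCubic W) (h : W.Equation x y) (hx : 1 < padicNorm 2 x) :
    y ≠ W.negY x y := by
  intro hneg
  rw [negY, hW.a₁_eq_zero, hW.a₃_eq_zero] at hneg
  have hY := hW.padicNorm_Y_sq h hx
  rw [show y = 0 by linarith, padicNorm.zero, zero_pow two_ne_zero] at hY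
  exact pow_ne_zero 3 (zero_lt_one.trans hx).ne' hY.symm

lemma padicNorm_slope_sq (hW : IsTwoIntegralCubic W) (h : W.Equation x y)
    (hx : 1 < padicNorm 2 x) : padicNorm 2 (W.slope x x y y) ^ 2 = 4 * padicNorm 2 x := by
  have hnum : padicNorm 2 (3 * x ^ 2 + (2 * W.a₂ * x + W.a₄)) = padicNorm 2 x ^ 2 := by
    have h3 : padicNorm 2 (3 * x ^ 2) = padicNorm 2 x ^ 2 := by
      have hthree : padicNorm 2 3 = 1 := by
        exact_mod_cast (padicNorm.nat_eq_one_iff 3).2 (by norm_num)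
      rw [padicNorm.mul, padicNorm_pow, hthree, one_mul]
    have hlower : padicNorm 2 (2 * W.a₂ * x + W.a₄) < padicNorm 2 x ^ 2 := by
      refine padicNorm_add_lt ?_ (hW.padicNorm_a₄_le_one.trans_lt (one_lt_pow₀ hx two_ne_zero))
      rw [padicNorm.mul, padicNorm.mul, padicNorm_two]
      nlinarith [hW.padicNorm_a₂_le_one, padicNorm.nonneg (p := 2) W.a₂]
    rw [padicNorm_add_eq_left (h3 ▸ hlower), h3]
  have hden : padicNorm 2 (y - W.negY x y) = padicNorm 2 y * 2⁻¹ := by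
    rw [negY, hW.a₁_eq_zero, hW.a₃_eq_zero, show y - (-y - 0 * x - 0) = 2 * y by ring,
      padicNorm.mul, padicNorm_two]
    ring
  have hy := hW.padicNorm_Y_sq h hx
  rw [slope_of_Y_ne rfl (hW.Y_ne_negY h hx), hW.a₁_eq_zero,
    show 3 * x ^ 2 + 2 * W.a₂ * x + W.a₄ - 0 * y = 3 * x ^ 2 + (2 * W.a₂ * x + W.a₄) by
      ring,
    padicNorm.div, hnum, hden, div_pow, mul_pow, hy]
  have : padicNorm 2 x ≠ 0 := (zero_lt_one.trans hx).ne'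
  field_simp
  ring

lemma exists_two_nsmul_some_eq (hW : IsTwoIntegralCubic W) (h : W.Nonsingular x y)
    (hx : 1 < padicNorm 2 x) : ∃ (x' y' : ℚ) (h' : W.Nonsingular x' y'),
      2 • Point.some _ _ h = Point.some _ _ h' ∧ padicNorm 2 x' = 4 * padicNorm 2 x := by
  have hy := hW.Y_ne_negY h.1 hx
  refine ⟨_, _, _, by rw [two_nsmul, Point.add_self_of_Y_ne hy], ?_⟩
  have hl := hW.padicNorm_slope_sq h.1 hx
  have hlower : padicNorm 2 (-(W.a₂ + 2 * x)) < 4 * padicNorm 2 x := by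
    rw [padicNorm.neg]
    refine padicNorm_add_lt (by linarith [hW.padicNorm_a₂_le_one]) ?_
    rw [padicNorm.mul, padicNorm_two]
    linarith
  rw [addX, hW.a₁_eq_zero,
    show ∀ l : ℚ, l ^ 2 + 0 * l - W.a₂ - x - x = l ^ 2 + -(W.a₂ + 2 * x) by intro l; ring,
    padicNorm_add_eq_left (by rwa [padicNorm_pow, hl]), padicNorm_pow, hl]

lemma exists_two_pow_nsmul_some_eq (hW : IsTwoIntegralCubic W) (h : W.Nonsingular x y)
    (hx : 1 < padicNorm 2 x) (k : ℕ) : ∃ (x' y' : ℚ) (h' : W.Nonsingular x' y'),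
      2 ^ k • Point.some _ _ h = Point.some _ _ h' ∧
        padicNorm 2 x' = 4 ^ k * padicNorm 2 x := by
  induction k with
  | zero => exact ⟨x, y, h, by simp, by simp⟩
  | succ k ih =>
    obtain ⟨x', y', h', hk, hx'⟩ := ih
    obtain ⟨x'', y'', h'', hk', hx''⟩ :=
      hW.exists_two_nsmul_some_eq h' (hx.trans_le <| by
        rw [hx']; exact le_mul_of_one_le_left (by positivity) (one_le_pow₀ (by norm_num)))
    refine ⟨x'', y'', h'', by rw [pow_succ, mul_nsmul, hk, hk'], ?_⟩
    rw [hx'', hx', pow_succ']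
    ring

lemma not_isOfFinAddOrder_some (hW : IsTwoIntegralCubic W) (h : W.Nonsingular x y)
    (hx : 1 < padicNorm 2 x) : ¬IsOfFinAddOrder (Point.some _ _ h) := by
  refine not_isOfFinAddOrder_of_injective_nsmul_comp (f := (2 ^ ·)) fun k l hkl => ?_
  obtain ⟨xk, yk, hk, ek, hxk⟩ := hW.exists_two_pow_nsmul_some_eq h hx k
  obtain ⟨xl, yl, hl, el, hxl⟩ := hW.exists_two_pow_nsmul_some_eq h hx l
  simp only [ek, el, Point.some.injEq] at hkl
  rw [hkl.1, hxl, mul_left_inj' (zero_lt_one.trans hx).ne'] at hxk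
  exact pow_right_injective₀ (by norm_num : (0 : ℚ) < 4) (by norm_num) hxk.symm

end IsTwoIntegralCubic

namespace W11

lemma isTwoIntegralCubic : IsTwoIntegralCubic W11 where
  a₁_eq_zero := rfl
  a₃_eq_zero := rfl
  padicNorm_a₂_le_one := padicNorm_le_one_of_not_dvd_den (by norm_num [W11])
  padicNorm_a₄_le_one := padicNorm_le_one_of_not_dvd_den (by norm_num [W11])
  padicNorm_a₆_le_one := padicNorm_le_one_of_not_dvd_den (by norm_num [W11])

lemma Δ_ne_zero : W11.Δ ≠ 0 := by
  norm_num [W11, WeierstrassCurve.Δ, WeierstrassCurve.b₂, WeierstrassCurve.b₄,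
    WeierstrassCurve.b₆, WeierstrassCurve.b₈]

lemma nonsingular_of_equation {x y : ℚ} (h : W11.Equation x y) : W11.Nonsingular x y :=
  (equation_iff_nonsingular_of_Δ_ne_zero Δ_ne_zero).1 h

lemma exists_six_nsmul_some_eq (hP : W11.Nonsingular (-1792 / 243) (3328 / 2187)) :
    ∃ (x y : ℚ) (h : W11.Nonsingular x y),
      6 • Point.some _ _ hP = Point.some _ _ h ∧ 1 < padicNorm 2 x := by
  have h2 : W11.Nonsingular (16708 / 729) (-2392940 / 19683) :=
    nonsingular_of_equation (by rw [equation_iff]; norm_num [W11])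
  have h3 : W11.Nonsingular (-48649964032 / 7406990163)
      (215295711647744 / 122681978069769) :=
    nonsingular_of_equation (by rw [equation_iff]; norm_num [W11])
  have h6 : W11.Nonsingular
      (2710039235354333119188061813933777 / 209242386338142624935394392168976)
      (154867437900539954854556692298960809811005789624415 /
        3026735681243498448282568364595585634670591116224) :=
    nonsingular_of_equation (by rw [equation_iff]; norm_num [W11])
  have e2 : Point.some _ _ hP + Point.some _ _ hP = Point.some _ _ h2 := by
    refine Point.some_add_some_eq_some ?_ ?_ ?_ <;>
      norm_num [W11, WeierstrassCurve.Affine.slope, addX, addY, negAddY, negY]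
  have e3 : Point.some _ _ h2 + Point.some _ _ hP = Point.some _ _ h3 := by
    refine Point.some_add_some_eq_some ?_ ?_ ?_ <;>
      norm_num [W11, WeierstrassCurve.Affine.slope, addX, addY, negAddY, negY]
  have e6 : Point.some _ _ h3 + Point.some _ _ h3 = Point.some _ _ h6 := by
    refine Point.some_add_some_eq_some ?_ ?_ ?_ <;>
      norm_num [W11, WeierstrassCurve.Affine.slope, addX, addY, negAddY, negY]
  refine ⟨_, _, h6, ?_, ?_⟩
  · rw [show 6 = 3 + 3 from rfl, add_nsmul, show 3 = 2 + 1 from rfl, succ_nsmul, two_nsmul, e2,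
      e3, e6]
  · rw [show (2710039235354333119188061813933777 / 209242386338142624935394392168976 : ℚ) =
        ((2710039235354333119188061813933777 : ℤ) : ℚ) /
          ((2 : ℕ) ^ 4 * ((13077649146133914058462149510561 : ℤ) : ℚ)) by norm_num,
      padicNorm_intCast_div_pow_mul 4 (by norm_num) (by norm_num)]
    norm_num

end W11

/-- The point `P₁ = (-1792/243, 3328/2187)` lies on the curve and has infinite order. -/
theorem stmt11 : W11.Equation (-1792 / 243) (3328 / 2187) ∧
    ∃ h : W11.Nonsingular (-1792 / 243) (3328 / 2187),
      ¬ IsOfFinAddOrder (WeierstrassCurve.Affine.Point.some _ _ h) := by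
  have hE : W11.Equation (-1792 / 243) (3328 / 2187) := by
    rw [equation_iff]
    norm_num [W11]
  have hP := W11.nonsingular_of_equation hE
  obtain ⟨x, y, h, h6P, hx⟩ := W11.exists_six_nsmul_some_eq hP
  refine ⟨hE, hP, fun hfin => W11.isTwoIntegralCubic.not_isOfFinAddOrder_some h hx ?_⟩
  exact h6P ▸ hfin.nsmul
end

section
/- The point P = (752/2401, 240/16807) lies on the elliptic curve Y² = X³ − (747/2401)X² − (1024/5764801)X + 764928/13841287201 over ℚ and has infinite order in the group of rational points of this curve. -/
/-- The elliptic curve `Y² = X³ - (747/2401)X² - (1024/5764801)X + 764928/13841287201` over `ℚ`. -/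
def W13 : WeierstrassCurve.Affine ℚ :=
  { a₁ := 0, a₂ := -747 / 2401, a₃ := 0, a₄ := -1024 / 5764801, a₆ := 764928 / 13841287201 }

/-!
The cubic factors as `(X - 32/2401)(X + 32/2401)(X - 747/2401)`, so 2-descent applies: if
`(x, y) = 2Q` then `x - e` is a rational square for every root `e`. This shows that no nonzero
2-torsion point is a double, hence a torsion point `S` would have a translate `S + T` by a
2-torsion point `T` lying in `2E(ℚ)`. For `P` and its three translates `P + T` the value
`x - 32/2401` is `720/2401`, negative, negative and `2288/49`, never a square.
-/

theorem IsOfFinAddOrder.exists_add_eq_two_nsmul {G : Type*} [AddCommGroup G]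
    (h4 : ∀ R : G, 4 • R = 0 → 2 • R = 0) {x : G} (hx : IsOfFinAddOrder x) :
    ∃ T R : G, 2 • T = 0 ∧ x + T = 2 • R := by
  have hpos := hx.addOrderOf_pos
  have hn : addOrderOf x • x = 0 := addOrderOf_nsmul_eq_zero x
  rcases Nat.even_or_odd' (addOrderOf x) with ⟨m, hm | hm⟩ <;> rw [hm] at hn hpos
  · rcases Nat.even_or_odd' m with ⟨r, rfl | rfl⟩
    · have h4r : 4 • r • x = 0 := by rw [smul_smul, ← hn, ← mul_assoc]; rfl
      have hdvd : addOrderOf x ∣ 2 * r :=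
        addOrderOf_dvd_of_nsmul_eq_zero (by rw [← smul_smul]; exact h4 _ h4r)
      have := Nat.le_of_dvd (by omega) hdvd
      omega
    · exact ⟨(2 * r + 1) • x, (r + 1) • x, by rw [smul_smul, hn], by module⟩
  · refine ⟨0, (m + 1) • x, nsmul_zero 2, ?_⟩
    rw [add_zero, smul_smul, show 2 * (m + 1) = 2 * m + 1 + 1 by ring, succ_nsmul, hn, zero_add]

namespace WeierstrassCurve.Affine.Point

variable {F : Type*} [Field F] [DecidableEq F] {W : WeierstrassCurve.Affine F}

lemma Y_eq_negY_of_add_self_eq_zero {x y : F} {h : W.Nonsingular x y}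
    (h2 : some x y h + some x y h = 0) : y = W.negY x y := by
  by_contra hy
  rw [add_self_of_Y_ne hy] at h2
  exact some_ne_zero _ h2

lemma isSquare_sub_of_add_self_eq_some (ha₁ : W.a₁ = 0) (ha₃ : W.a₃ = 0) {e : F}
    (he : W.Equation e 0) {Q : W.Point} {x y : F} {h : W.Nonsingular x y}
    (hQ : Q + Q = some x y h) : IsSquare (x - e) := by
  rcases Q with _ | @⟨u, v, hQv⟩
  · exact absurd hQ.symm (some_ne_zero h)
  by_cases hv : v = W.negY u v
  · rw [add_self_of_Y_eq hv] at hQ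
    exact absurd hQ.symm (some_ne_zero h)
  rw [add_self_of_Y_ne hv, some.injEq] at hQ
  have hslope : W.slope u u v v * (2 * v) = 3 * u ^ 2 + 2 * W.a₂ * u + W.a₄ := by
    rw [slope_of_Y_ne rfl hv, div_mul_eq_mul_div, div_eq_iff (sub_ne_zero.mpr hv)]
    simp only [negY, ha₁, ha₃]
    ring
  have h2v : 2 * v ≠ 0 := fun h0 => hv (by simp only [negY, ha₁, ha₃]; linear_combination h0)
  have hu := hQv.1
  rw [equation_iff, ha₁, ha₃] at he hu
  -- `x - e = ((u - e)² - f'(e))² / (2v)²`, where `f` is the cubic and `x = x(2(u, v))`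
  refine ⟨((u - e) ^ 2 - (3 * e ^ 2 + 2 * W.a₂ * e + W.a₄)) / (2 * v), ?_⟩
  rw [div_mul_div_comm, eq_div_iff (mul_ne_zero h2v h2v), ← hQ.1, addX, ha₁]
  linear_combination (W.slope u u v v * (2 * v) + 3 * u ^ 2 + 2 * W.a₂ * u + W.a₄) * hslope
    + 4 * (W.a₂ + 2 * u + e) * (he - hu)

end WeierstrassCurve.Affine.Point

namespace W13

open WeierstrassCurve.Affine WeierstrassCurve.Affine.Point

lemma equation_zero_iff (e : ℚ) :
    W13.Equation e 0 ↔ e = 32 / 2401 ∨ e = -32 / 2401 ∨ e = 747 / 2401 := by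
  rw [equation_iff]
  simp only [W13]
  constructor
  · intro h
    have hprod : (e - 32 / 2401) * ((e + 32 / 2401) * (e - 747 / 2401)) = 0 := by
      linear_combination -h
    rcases mul_eq_zero.mp hprod with h | h
    · left; linarith
    rcases mul_eq_zero.mp h with h | h
    · right; left; linarith
    · right; right; linarith
  · rintro (rfl | rfl | rfl) <;> norm_num

lemma equation_P : W13.Equation (752 / 2401) (240 / 16807) := by
  rw [equation_iff]
  norm_num [W13]

lemma nonsingular_P : W13.Nonsingular (752 / 2401) (240 / 16807) := by
  rw [nonsingular_iff]
  exact ⟨equation_P, Or.inr (by norm_num [W13])⟩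

lemma eq_zero_or_eq_some_of_two_nsmul_eq_zero {T : W13.Point} (hT : 2 • T = 0) :
    T = 0 ∨ ∃ (e : ℚ) (h : W13.Nonsingular e 0), T = some e 0 h ∧
      (e = 32 / 2401 ∨ e = -32 / 2401 ∨ e = 747 / 2401) := by
  rcases T with _ | @⟨e, v, h⟩
  · exact Or.inl rfl
  rw [two_nsmul] at hT
  have hv := Y_eq_negY_of_add_self_eq_zero hT
  obtain rfl : v = 0 := by simp only [negY, W13] at hv; linarith
  exact Or.inr ⟨e, h, rfl, (equation_zero_iff e).mp h.1⟩

lemma isSquare_sub_of_two_nsmul_eq_some {R : W13.Point} {x y : ℚ} {h : W13.Nonsingular x y}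
    (hR : 2 • R = some x y h) {e : ℚ} (he : e = 32 / 2401 ∨ e = -32 / 2401 ∨ e = 747 / 2401) :
    IsSquare (x - e) :=
  isSquare_sub_of_add_self_eq_some rfl rfl ((equation_zero_iff e).mpr he) (by rwa [← two_nsmul])

lemma two_nsmul_eq_zero_of_four_nsmul_eq_zero (R : W13.Point) (hR : 4 • R = 0) : 2 • R = 0 := by
  rcases eq_zero_or_eq_some_of_two_nsmul_eq_zero (T := 2 • R) (by rwa [smul_smul]) with
    h0 | ⟨u, h, hRu, hu⟩
  · exact h0
  have hsq (e : ℚ) he := isSquare_sub_of_two_nsmul_eq_some hRu (e := e) he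
  rcases hu with rfl | rfl | rfl
  · exact absurd (hsq (747 / 2401) (by norm_num)) (by norm_num)
  · exact absurd (hsq (32 / 2401) (by norm_num)) (by norm_num)
  · exact absurd (hsq (32 / 2401) (by norm_num)) (by norm_num)

lemma P_add_ne_two_nsmul {T : W13.Point} (hT : 2 • T = 0) (R : W13.Point) :
    some _ _ nonsingular_P + T ≠ 2 • R := by
  intro hPR
  rcases eq_zero_or_eq_some_of_two_nsmul_eq_zero hT with rfl | ⟨e, h, rfl, he⟩
  · rw [add_zero] at hPR
    have := isSquare_sub_of_two_nsmul_eq_some hPR.symm (e := 32 / 2401) (by norm_num)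
    norm_num at this
  have hne : (752 / 2401 : ℚ) ≠ e := by rcases he with rfl | rfl | rfl <;> norm_num
  rw [add_of_X_ne hne] at hPR
  have := isSquare_sub_of_two_nsmul_eq_some hPR.symm (e := 32 / 2401) (by norm_num)
  rcases he with rfl | rfl | rfl <;> norm_num [slope_of_X_ne hne, W13] at this

end W13

/-- The point `P = (752/2401, 240/16807)` lies on the curve and has infinite order. -/
theorem stmt13 : W13.Equation (752 / 2401) (240 / 16807) ∧
    ∃ h : W13.Nonsingular (752 / 2401) (240 / 16807),
      ¬ IsOfFinAddOrder (WeierstrassCurve.Affine.Point.some _ _ h) := by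
  refine ⟨W13.equation_P, W13.nonsingular_P, fun hfin => ?_⟩
  obtain ⟨T, R, hT, hPR⟩ :=
    hfin.exists_add_eq_two_nsmul W13.two_nsmul_eq_zero_of_four_nsmul_eq_zero
  exact W13.P_add_ne_two_nsmul hT R hPR
end

section
/- The point P = (−77/2, 42) lies on the elliptic curve Y² = X³ + (81/2)X² − (2401/4)X − 194481/8 over ℚ and has infinite order in the group of rational points of this curve. -/
/-!
Let `v` be a nonarchimedean absolute value with `0 < v 2 < 1` on a field, and `W` a curve
`y² = x³ + a₂x² + a₄x + a₆`. If `v a₂ < v x`, `v a₄ < (v x)²`, `v a₆ < (v x)³` at a point `(x, y)`,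
then `x³` dominates the equation, so `(v y)² = (v x)³`; the tangent slope `ℓ` has
`(v ℓ)² = (v x)⁴ / (v 2 · v y)² = v x / (v 2)²`, and `ℓ²` dominates `x(2Q) = ℓ² - a₂ - 2x`.
Hence doubling multiplies `v x` by `(v 2)⁻² > 1`, the points `2ᵏQ` are pairwise distinct, and `Q`
has infinite order. For the 2-adic absolute value, `P` and `2P` have `|x|₂ = 2 = |a₂|₂`, but
`4P` has `|x|₂ = 2⁶`, which dominates `|a₂|₂ = 2`, `|a₄|₂ = 2²`, `|a₆|₂ = 2³`.
-/

/-- The elliptic curve `Y² = X³ + (81/2)X² - (2401/4)X - 194481/8` over `ℚ`. -/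
def W14 : WeierstrassCurve.Affine ℚ :=
  { a₁ := 0, a₂ := 81 / 2, a₃ := 0, a₄ := -2401 / 4, a₆ := -194481 / 8 }

namespace IsNonarchimedean

variable {F : Type*} [Field F] {v : AbsoluteValue F ℝ}

lemma apply_add_lt (hv : IsNonarchimedean v) {a b : F} {t : ℝ} (ha : v a < t) (hb : v b < t) :
    v (a + b) < t :=
  (hv a b).trans_lt (max_lt ha hb)

lemma apply_three_eq_one (hv : IsNonarchimedean v) (h2 : v 2 < 1) : v 3 = 1 := by
  refine le_antisymm (by exact_mod_cast hv.apply_natCast_le_one (n := 3)) ?_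
  by_contra! h3
  have : v (3 + -2) < 1 := hv.apply_add_lt h3 (by rwa [map_neg_eq_map])
  norm_num at this

end IsNonarchimedean

namespace WeierstrassCurve.Affine

variable {F : Type*} [Field F] {W : Affine F}

lemma two_nsmul_some_of_a₁_a₃ [DecidableEq F] (h₁ : W.a₁ = 0) (h₃ : W.a₃ = 0)
    {x y ℓ x' y' : F} (h : W.Nonsingular x y) (hy : 2 * y ≠ 0)
    (hℓ : ℓ * (2 * y) = 3 * x ^ 2 + 2 * W.a₂ * x + W.a₄) (hx' : x' = ℓ ^ 2 - W.a₂ - 2 * x)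
    (hy' : y' = ℓ * (x - x') - y) :
    ∃ h' : W.Nonsingular x' y', 2 • Point.some _ _ h = Point.some _ _ h' := by
  have hyneg : y ≠ W.negY x y := by
    rw [negY, h₁, h₃]
    contrapose! hy
    linear_combination hy
  have hslope : W.slope x x y y = ℓ := by
    rw [slope_of_Y_ne rfl hyneg, div_eq_iff (sub_ne_zero.mpr hyneg), negY, h₁, h₃]
    linear_combination -hℓ
  have hx'' : W.addX x x ℓ = x' := by rw [addX, h₁, hx']; ring
  have hy'' : W.addY x x y ℓ = y' := by
    rw [addY, negAddY, negY, hx'', h₁, h₃, hy']; ring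
  rw [← hx'', ← hy'', ← hslope]
  exact ⟨_, (two_nsmul _).trans (Point.add_self_of_Y_ne hyneg)⟩

structure IsLargeX (W : Affine F) (v : AbsoluteValue F ℝ) (x : F) : Prop where
  a₂_lt : v W.a₂ < v x
  a₄_lt : v W.a₄ < v x ^ 2
  a₆_lt : v W.a₆ < v x ^ 3

variable {v : AbsoluteValue F ℝ} {x : F}

lemma IsLargeX.pos (hx : W.IsLargeX v x) : 0 < v x :=
  (v.nonneg _).trans_lt hx.a₂_lt

lemma IsLargeX.mono {x' : F} (hx : W.IsLargeX v x) (hxx' : v x ≤ v x') : W.IsLargeX v x' where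
  a₂_lt := hx.a₂_lt.trans_le hxx'
  a₄_lt := hx.a₄_lt.trans_le (by gcongr)
  a₆_lt := hx.a₆_lt.trans_le (by gcongr)

lemma IsLargeX.apply_Y_sq (hv : IsNonarchimedean v) (h₁ : W.a₁ = 0) (h₃ : W.a₃ = 0) {y : F}
    (hx : W.IsLargeX v x) (h : W.Equation x y) : v y ^ 2 = v x ^ 3 := by
  rw [equation_iff, h₁, h₃] at h
  have hx3 : v (W.a₂ * x ^ 2 + W.a₄ * x + W.a₆) < v (x ^ 3) := by
    have hx0 := hx.pos
    rw [map_pow]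
    refine hv.apply_add_lt (hv.apply_add_lt ?_ ?_) hx.a₆_lt
    · rw [map_mul, map_pow]
      calc v W.a₂ * v x ^ 2 < v x * v x ^ 2 := by gcongr; exact hx.a₂_lt
        _ = v x ^ 3 := by ring
    · rw [map_mul]
      calc v W.a₄ * v x < v x ^ 2 * v x := by gcongr; exact hx.a₄_lt
        _ = v x ^ 3 := by ring
  rw [← map_pow, ← map_pow, ← hv.add_eq_left_of_lt hx3]
  congr 1
  linear_combination h

lemma IsLargeX.apply_tangent (hv : IsNonarchimedean v) (h2 : v 2 < 1) (hx : W.IsLargeX v x) :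
    v (3 * x ^ 2 + 2 * W.a₂ * x + W.a₄) = v x ^ 2 := by
  have hx0 := hx.pos
  have h3x2 : v (3 * x ^ 2) = v x ^ 2 := by
    rw [map_mul, map_pow, hv.apply_three_eq_one h2, one_mul]
  have h2a₂x : v (2 * W.a₂ * x) < v (3 * x ^ 2) := by
    rw [h3x2, map_mul, map_mul, sq]
    gcongr
    calc v 2 * v W.a₂ ≤ 1 * v W.a₂ := by gcongr
      _ < v x := by rw [one_mul]; exact hx.a₂_lt
  have hlead : v (3 * x ^ 2 + 2 * W.a₂ * x) = v x ^ 2 := by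
    rw [hv.add_eq_left_of_lt h2a₂x, h3x2]
  rw [hv.add_eq_left_of_lt (hlead ▸ hx.a₄_lt), hlead]

lemma IsLargeX.exists_two_nsmul [DecidableEq F] (hv : IsNonarchimedean v) (h2pos : 0 < v 2)
    (h2 : v 2 < 1) (h₁ : W.a₁ = 0) (h₃ : W.a₃ = 0) {y : F} (hx : W.IsLargeX v x)
    (h : W.Nonsingular x y) :
    ∃ (x' y' : F) (h' : W.Nonsingular x' y'),
      2 • Point.some _ _ h = Point.some _ _ h' ∧ v x' * v 2 ^ 2 = v x := by
  have hx0 := hx.pos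
  have hy2 := hx.apply_Y_sq hv h₁ h₃ h.1
  have hy0 : y ≠ 0 := by
    rintro rfl
    rw [map_zero] at hy2
    nlinarith [pow_pos hx0 3]
  have h2y : 2 * y ≠ 0 := mul_ne_zero (v.pos_iff.mp h2pos) hy0
  set ℓ := (3 * x ^ 2 + 2 * W.a₂ * x + W.a₄) / (2 * y)
  have hvℓ : v ℓ ^ 2 * v 2 ^ 2 = v x := by
    have hvy : v y ≠ 0 := v.ne_zero_iff.mpr hy0
    rw [map_div₀, hx.apply_tangent hv h2, map_mul]
    field_simp
    rw [hy2]
  have hvℓx : v x < v ℓ ^ 2 := by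
    have hv22 : v 2 ^ 2 < 1 := pow_lt_one₀ h2pos.le h2 two_ne_zero
    have hvℓ0 : 0 < v ℓ ^ 2 := pos_of_mul_pos_left (hvℓ ▸ hx0) (by positivity)
    rw [← hvℓ]
    exact mul_lt_of_lt_one_right hvℓ0 hv22
  have hvtail : v (-(W.a₂ + x + x)) < v (ℓ ^ 2) := by
    rw [map_neg_eq_map, map_pow]
    exact hv.apply_add_lt (hv.apply_add_lt (hx.a₂_lt.trans hvℓx) hvℓx) hvℓx
  obtain ⟨h', h2P⟩ := two_nsmul_some_of_a₁_a₃ h₁ h₃ h h2y (div_mul_cancel₀ _ h2y) rfl rfl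
  refine ⟨_, _, h', h2P, ?_⟩
  rw [show ℓ ^ 2 - W.a₂ - 2 * x = ℓ ^ 2 + -(W.a₂ + x + x) by ring, hv.add_eq_left_of_lt hvtail,
    map_pow, hvℓ]

lemma IsLargeX.exists_two_pow_nsmul [DecidableEq F] (hv : IsNonarchimedean v) (h2pos : 0 < v 2)
    (h2 : v 2 < 1) (h₁ : W.a₁ = 0) (h₃ : W.a₃ = 0) {y : F} (hx : W.IsLargeX v x)
    (h : W.Nonsingular x y) (k : ℕ) :
    ∃ (x' y' : F) (h' : W.Nonsingular x' y'),
      2 ^ k • Point.some _ _ h = Point.some _ _ h' ∧ v x' * (v 2 ^ 2) ^ k = v x := by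
  induction k with
  | zero => exact ⟨x, y, h, one_nsmul _, by ring⟩
  | succ k ih =>
    obtain ⟨xk, yk, hk, hkQ, hvk⟩ := ih
    have hxk : W.IsLargeX v xk := hx.mono <| hvk ▸
      mul_le_of_le_one_right (v.nonneg xk) (pow_le_one₀ (by positivity) (by nlinarith))
    obtain ⟨x', y', h', h2Q, hv'⟩ := hxk.exists_two_nsmul hv h2pos h2 h₁ h₃ hk
    refine ⟨x', y', h', by rw [pow_succ', mul_nsmul', hkQ, h2Q], ?_⟩
    rw [← hvk, ← hv']
    ring

lemma IsLargeX.not_isOfFinAddOrder [DecidableEq F] (hv : IsNonarchimedean v) (h2pos : 0 < v 2)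
    (h2 : v 2 < 1) (h₁ : W.a₁ = 0) (h₃ : W.a₃ = 0) {y : F} (hx : W.IsLargeX v x)
    (h : W.Nonsingular x y) : ¬ IsOfFinAddOrder (Point.some _ _ h) := by
  intro hfin
  have hinj : Function.Injective fun k : ℕ => 2 ^ k • Point.some _ _ h := by
    intro k l hkl
    obtain ⟨xk, yk, hk, hkQ, hvk⟩ := hx.exists_two_pow_nsmul hv h2pos h2 h₁ h₃ h k
    obtain ⟨xl, yl, hl, hlQ, hvl⟩ := hx.exists_two_pow_nsmul hv h2pos h2 h₁ h₃ h l
    have hxkl : xk = xl := (Point.some.inj (hkQ.symm.trans (hkl.trans hlQ))).1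
    have hvxk : v xk ≠ 0 := fun h0 => hx.pos.ne' (by rw [← hvk, h0, zero_mul])
    refine pow_right_injective₀ (a := v 2 ^ 2) (by positivity) (by nlinarith) ?_
    exact mul_left_cancel₀ hvxk (by rw [hvk, hxkl, hvl])
  refine Set.infinite_range_of_injective hinj (hfin.finite_multiples.subset ?_)
  rintro _ ⟨k, rfl⟩
  exact ⟨2 ^ k, rfl⟩

end WeierstrassCurve.Affine

namespace Rat.AbsoluteValue

variable (p : ℕ) [Fact p.Prime]

lemma isNonarchimedean_padic : IsNonarchimedean (padic p) := fun q r => by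
  simp only [padic_eq_padicNorm]
  exact_mod_cast padicNorm.nonarchimedean

lemma padic_self : padic p p = (p : ℝ)⁻¹ := by
  simp [padicNorm.padicNorm_p_of_prime]

variable {p}

lemma padic_eq_pow_of_mul_eq {x : ℚ} {a b : ℤ} {n : ℕ} (ha : ¬ (p : ℤ) ∣ a) (hb : ¬ (p : ℤ) ∣ b)
    (hx : x * (b * p ^ n) = a) : padic p x = (p : ℝ) ^ n := by
  have hunit {c : ℤ} (hc : ¬ (p : ℤ) ∣ c) : padic p c = 1 := by
    rw [padic_eq_padicNorm, (padicNorm.int_eq_one_iff c).mpr hc, Rat.cast_one]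
  have := congrArg (padic p) hx
  rw [map_mul, map_mul, map_pow, hunit ha, hunit hb, padic_self, one_mul, inv_pow] at this
  have hp0 : (p : ℝ) ^ n ≠ 0 := pow_ne_zero _ (Nat.cast_ne_zero.mpr (Fact.out : p.Prime).ne_zero)
  exact (mul_inv_eq_one₀ hp0).mp this

end Rat.AbsoluteValue

open WeierstrassCurve.Affine Rat.AbsoluteValue

lemma W14.four_nsmul_some (h : W14.Nonsingular (-77 / 2) 42) :
    ∃ h₄ : W14.Nonsingular (535967041 / 19713600) (-8487621239311 / 87528384000),
      4 • Point.some _ _ h = Point.some _ _ h₄ := by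
  obtain ⟨h₂, h2P⟩ := two_nsmul_some_of_a₁_a₃ (W := W14) rfl rfl (ℓ := 26 / 3)
    (x' := 2009 / 18) (y' := -36260 / 27) h (by norm_num) (by norm_num [W14])
    (by norm_num [W14]) (by norm_num)
  obtain ⟨h₄, h4P⟩ := two_nsmul_some_of_a₁_a₃ (W := W14) rfl rfl (ℓ := -25243 / 1480)
    (x' := 535967041 / 19713600) (y' := -8487621239311 / 87528384000) h₂ (by norm_num)
    (by norm_num [W14]) (by norm_num [W14]) (by norm_num)
  exact ⟨h₄, by rw [show 4 = 2 * 2 from rfl, mul_nsmul', h2P, h4P]⟩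

lemma W14.isLargeX_padic_two : W14.IsLargeX (padic 2) (535967041 / 19713600) := by
  have hx : padic 2 (535967041 / 19713600) = 2 ^ 6 :=
    padic_eq_pow_of_mul_eq (a := 535967041) (b := 308025) (by decide) (by decide) (by norm_num)
  have ha₂ : padic 2 W14.a₂ = 2 ^ 1 :=
    padic_eq_pow_of_mul_eq (a := 81) (b := 1) (by decide) (by decide) (by norm_num [W14])
  have ha₄ : padic 2 W14.a₄ = 2 ^ 2 :=
    padic_eq_pow_of_mul_eq (a := -2401) (b := 1) (by decide) (by decide) (by norm_num [W14])
  have ha₆ : padic 2 W14.a₆ = 2 ^ 3 :=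
    padic_eq_pow_of_mul_eq (a := -194481) (b := 1) (by decide) (by decide) (by norm_num [W14])
  constructor <;> norm_num [hx, ha₂, ha₄, ha₆]

/-- The point `P = (-77/2, 42)` lies on the curve and has infinite order. -/
theorem stmt14 : W14.Equation (-77 / 2) 42 ∧
    ∃ h : W14.Nonsingular (-77 / 2) 42,
      ¬ IsOfFinAddOrder (WeierstrassCurve.Affine.Point.some _ _ h) := by
  have heq : W14.Equation (-77 / 2) 42 := by norm_num [equation_iff, W14]
  have hns : W14.Nonsingular (-77 / 2) 42 := by
    rw [nonsingular_iff]; exact ⟨heq, Or.inr (by norm_num [W14])⟩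
  refine ⟨heq, hns, fun hfin => ?_⟩
  obtain ⟨h₄, h4P⟩ := W14.four_nsmul_some hns
  have hv2 : padic 2 2 = 1 / 2 := by simpa using padic_self 2
  refine W14.isLargeX_padic_two.not_isOfFinAddOrder (isNonarchimedean_padic 2) (by norm_num [hv2])
    (by norm_num [hv2]) rfl rfl h₄ (h4P ▸ hfin.nsmul)
end
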